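/- arXiv:1702.02569 — 9 statements merged into one kernel-verified Lean document; each statement's English description precedes it below -/
import Mathlib

section
/- Let p be prime, x ∈ ℤ_p, and A : ℕ → ℤ_p a polynomial function (i.e., A(n) = ∑_{j=0}^ℓ a_j n^j with a_j ∈ ℤ_p). Then ∑_{n=0}^∞ n! · ((n+1)·A(n+1)·x − A(n)) · x^n converges in ℚ_p with sum −A(0). -/
open Nat Polynomial Filter

private lemma pow_div_dvd_factorial (p : ℕ) (hp : p.Prime) (n : ℕ) : p ^ (n / p) ∣ n ! := by
  rcases lt_or_ge n p with h | h
  · simp [Nat.div_eq_of_lt h]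
  · rw [Nat.Prime.pow_dvd_factorial_iff hp (Nat.lt_succ_self _)]
    have hlog : 0 < Nat.log p n := Nat.log_pos hp.one_lt h
    have h1 : 1 ∈ Finset.Ico 1 (Nat.log p n + 1) := by
      simp only [Finset.mem_Ico]
      omega
    calc n / p = n / p ^ 1 := by rw [pow_one]
      _ ≤ ∑ i ∈ Finset.Ico 1 (Nat.log p n + 1), n / p ^ i :=
          Finset.single_le_sum (f := fun i => n / p ^ i) (fun i _ => Nat.zero_le _) h1

private lemma tendsto_norm_factorial_padic (p : ℕ) [hp : Fact p.Prime] :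
    Tendsto (fun n : ℕ => ‖((n ! : ℤ_[p]))‖) atTop (nhds 0) := by
  have hbound : ∀ n : ℕ, ‖((n ! : ℤ_[p]))‖ ≤ ((p : ℝ)⁻¹) ^ (n / p) := by
    intro n
    have : ‖((n ! : ℤ_[p]))‖ ≤ (p : ℝ) ^ (-(n / p : ℕ) : ℤ) := by
      rw [PadicInt.norm_le_pow_iff_mem_span_pow, Ideal.mem_span_singleton]
      exact_mod_cast (Nat.cast_dvd_cast (α := ℤ_[p]) (pow_div_dvd_factorial p hp.out n))
    rwa [zpow_neg, zpow_natCast, ← inv_pow] at this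
  have hp1 : (1 : ℝ) < p := by exact_mod_cast hp.out.one_lt
  have hdiv : Tendsto (fun n : ℕ => n / p) atTop atTop := by
    apply tendsto_atTop_atTop.mpr
    intro b
    exact ⟨b * p, fun n hn => (Nat.le_div_iff_mul_le hp.out.pos).mpr hn⟩
  have hgeo : Tendsto (fun n : ℕ => ((p : ℝ)⁻¹) ^ (n / p)) atTop (nhds 0) :=
    (tendsto_pow_atTop_nhds_zero_of_lt_one (by positivity)
      (inv_lt_one_of_one_lt₀ hp1)).comp hdiv
  exact squeeze_zero (fun n => norm_nonneg _) hbound hgeo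

/-- For a prime `p`, `x ∈ ℤ_p` and a polynomial `A` with coefficients in `ℤ_p`,
`∑_{n=0}^∞ n!·((n+1)·A(n+1)·x − A(n))·x^n` converges in `ℚ_p` with sum `−A(0)`. -/
theorem hasSum_telescoping_padic (p : ℕ) [Fact p.Prime] (x : ℤ_[p]) (A : Polynomial ℤ_[p]) :
    HasSum
      (fun n : ℕ => (n ! : ℚ_[p]) *
        ((((n : ℤ_[p]) + 1) * A.eval ((n : ℤ_[p]) + 1) * x - A.eval (n : ℤ_[p]) : ℤ_[p]) : ℚ_[p]) *
        (x : ℚ_[p]) ^ n)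
      (-((A.eval 0 : ℤ_[p]) : ℚ_[p])) := by
  set f : ℕ → ℚ_[p] := fun n => (n ! : ℚ_[p]) *
        ((((n : ℤ_[p]) + 1) * A.eval ((n : ℤ_[p]) + 1) * x - A.eval (n : ℤ_[p]) : ℤ_[p]) : ℚ_[p]) *
        (x : ℚ_[p]) ^ n with hf
  set g : ℕ → ℚ_[p] := fun n =>
    (((n ! : ℤ_[p]) * A.eval (n : ℤ_[p]) * x ^ n : ℤ_[p]) : ℚ_[p]) with hg
  have hdiff : ∀ n : ℕ, f n = g (n + 1) - g n := by
    intro n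
    simp only [hf, hg, Nat.factorial_succ]
    push_cast
    ring
  -- g tends to 0
  have hgnorm : ∀ n : ℕ, ‖g n‖ ≤ ‖((n ! : ℤ_[p]))‖ := by
    intro n
    simp only [hg]
    rw [PadicInt.padic_norm_e_of_padicInt]
    calc ‖(n ! : ℤ_[p]) * A.eval (n : ℤ_[p]) * x ^ n‖
        ≤ ‖(n ! : ℤ_[p]) * A.eval (n : ℤ_[p])‖ * ‖x ^ n‖ := norm_mul_le _ _
      _ ≤ ‖(n ! : ℤ_[p]) * A.eval (n : ℤ_[p])‖ * 1 := by
          gcongr; exact (PadicInt.norm_le_one _)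
      _ = ‖(n ! : ℤ_[p]) * A.eval (n : ℤ_[p])‖ := mul_one _
      _ ≤ ‖(n ! : ℤ_[p])‖ * ‖A.eval (n : ℤ_[p])‖ := norm_mul_le _ _
      _ ≤ ‖(n ! : ℤ_[p])‖ * 1 := by gcongr; exact (PadicInt.norm_le_one _)
      _ = ‖(n ! : ℤ_[p])‖ := mul_one _
  have hg0 : Tendsto g atTop (nhds 0) := by
    rw [tendsto_zero_iff_norm_tendsto_zero]
    exact squeeze_zero (fun n => norm_nonneg _) hgnorm (tendsto_norm_factorial_padic p)
  have hf0 : Tendsto f atTop (nhds 0) := by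
    have : Tendsto (fun n => g (n + 1) - g n) atTop (nhds (0 - 0)) :=
      ((hg0.comp (tendsto_add_atTop_nat 1)).sub hg0)
    rw [sub_zero] at this
    exact this.congr (fun n => (hdiff n).symm)
  have hsummable : Summable f := by
    apply NonarchimedeanAddGroup.summable_of_tendsto_cofinite_zero
    rwa [Nat.cofinite_eq_atTop]
  have hsum := hsummable.hasSum
  -- partial sums telescope
  have hpartial : ∀ N : ℕ, ∑ n ∈ Finset.range N, f n = g N - g 0 := by
    intro N
    simp only [hdiff]
    exact Finset.sum_range_sub g N
  have htend1 : Tendsto (fun N => ∑ n ∈ Finset.range N, f n) atTop (nhds (∑' n, f n)) :=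
    hsum.tendsto_sum_nat
  have htend2 : Tendsto (fun N => ∑ n ∈ Finset.range N, f n) atTop (nhds (0 - g 0)) := by
    refine Tendsto.congr (fun N => (hpartial N).symm) (hg0.sub tendsto_const_nhds)
  have : ∑' n, f n = 0 - g 0 := tendsto_nhds_unique htend1 htend2
  have hg0val : g 0 = ((A.eval 0 : ℤ_[p]) : ℚ_[p]) := by
    simp [hg]
  rw [this, hg0val, zero_sub] at hsum
  exact hsum
end

section
/- For every prime p and every polynomial A with integer coefficients, ∑_{n=0}^∞ n! · ((n+1)·A(n+1) − A(n)) = −A(0) in ℚ_p. -/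
open Nat Polynomial Filter Topology

/-!
Put `g n = n! · A(n)`. Since `(n + 1)! = (n + 1) · n!`, the `n`-th term of the series is
`g (n + 1) - g n`, so the partial sums are `g N - g 0 = g N - A(0)`. For `n ≥ p ^ k` we have
`p ^ k ∣ n!`, hence `|g n|_p ≤ |n!|_p ≤ p ^ (-k)` and `g N → 0`. In the complete nonarchimedean
field `ℚ_p` terms tending to zero already give unconditional summability, so the sum is `-A(0)`.
-/

theorem NonarchimedeanAddGroup.hasSum_sub_of_tendsto_zero {G : Type*} [AddCommGroup G]
    [UniformSpace G] [IsUniformAddGroup G] [CompleteSpace G] [NonarchimedeanAddGroup G]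
    [T2Space G] {g : ℕ → G} (hg : Tendsto g atTop (𝓝 0)) :
    HasSum (fun n => g (n + 1) - g n) (-g 0) := by
  have hdiff : Tendsto (fun n => g (n + 1) - g n) atTop (𝓝 0) := by
    simpa using (hg.comp (tendsto_add_atTop_nat 1)).sub hg
  have hsum : Summable (fun n => g (n + 1) - g n) :=
    summable_of_tendsto_cofinite_zero (by rwa [Nat.cofinite_eq_atTop])
  rw [hsum.hasSum_iff_tendsto_nat, funext (Finset.sum_range_sub g)]
  simpa using hg.sub_const (g 0)

namespace Padic

variable {p : ℕ} [Fact p.Prime]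

theorem norm_factorial_le_norm_p_pow {n k : ℕ} (h : p ^ k ≤ n) :
    ‖(n ! : ℚ_[p])‖ ≤ ‖(p : ℚ_[p])‖ ^ k := by
  obtain ⟨m, hm⟩ := Nat.dvd_factorial (pow_pos (Fact.out : p.Prime).pos k) h
  rw [hm, Nat.cast_mul, norm_mul, Nat.cast_pow, norm_pow]
  exact mul_le_of_le_one_right (by positivity) (IsUltrametricDist.norm_natCast_le_one ℚ_[p] m)

variable (p) in
theorem tendsto_factorial_atTop_nhds_zero : Tendsto (fun n : ℕ => (n ! : ℚ_[p])) atTop (𝓝 0) := by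
  refine Metric.tendsto_atTop.2 fun ε hε => ?_
  obtain ⟨k, hk⟩ := exists_pow_lt_of_lt_one hε (norm_p_lt_one (p := p))
  exact ⟨p ^ k, fun n hn => by simpa using (norm_factorial_le_norm_p_pow hn).trans_lt hk⟩

end Padic

/-- For every prime `p` and every integer polynomial `A`,
`∑_{n=0}^∞ n!·((n+1)·A(n+1) − A(n)) = −A(0)` in `ℚ_p`. -/
theorem hasSum_telescoping_int_padic (p : ℕ) [Fact p.Prime] (A : Polynomial ℤ) :
    HasSum
      (fun n : ℕ => (n ! : ℚ_[p]) *
        ((((n : ℤ) + 1) * A.eval ((n : ℤ) + 1) - A.eval (n : ℤ) : ℤ) : ℚ_[p]))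
      (-((A.eval 0 : ℤ) : ℚ_[p])) := by
  set g : ℕ → ℚ_[p] := fun n => (n ! : ℚ_[p]) * ((A.eval (n : ℤ) : ℤ) : ℚ_[p])
  have hg : Tendsto g atTop (𝓝 0) :=
    (Padic.tendsto_factorial_atTop_nhds_zero p).zero_mul_isBoundedUnder_le
      (isBoundedUnder_of ⟨1, fun n => Padic.norm_int_le_one _⟩)
  have hterm : ∀ n : ℕ, g (n + 1) - g n = (n ! : ℚ_[p]) *
      ((((n : ℤ) + 1) * A.eval ((n : ℤ) + 1) - A.eval (n : ℤ) : ℤ) : ℚ_[p]) := by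
    intro n
    simp only [g, Nat.factorial_succ]
    push_cast
    ring
  rw [← funext hterm, show ((A.eval 0 : ℤ) : ℚ_[p]) = g 0 by simp [g]]
  exact NonarchimedeanAddGroup.hasSum_sub_of_tendsto_zero hg
end

section
/- For every k ≥ 1 there exists a unique pair of integers (u_k, v_k) and a unique polynomial A_{k-1} of degree k−1 with integer coefficients such that (n+1)·A_{k-1}(n+1) − A_{k-1}(n) = n^k + u_k holds for all n, and v_k = −A_{k-1}(0). -/
open Nat Polynomial

noncomputable def Tm (A : Polynomial ℤ) : Polynomial ℤ := (X + 1) * A.comp (X + 1) - A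

lemma X1_natDegree : (X + 1 : Polynomial ℤ).natDegree = 1 := by
  simpa using natDegree_X_add_C (1 : ℤ)

lemma X1_monic : (X + 1 : Polynomial ℤ).Monic := by
  simpa using monic_X_add_C (1 : ℤ)

lemma eval_Tm (A : Polynomial ℤ) (n : ℤ) :
    (Tm A).eval n = (n + 1) * A.eval (n + 1) - A.eval n := by
  simp [Tm, eval_comp]

lemma Tm_sub (A B : Polynomial ℤ) : Tm (A - B) = Tm A - Tm B := by
  simp [Tm, sub_comp]; ring

lemma Tm_natDegree {A : Polynomial ℤ} (hA : A ≠ 0) :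
    (Tm A).natDegree = A.natDegree + 1 := by
  have hc : (A.comp (X + 1)).leadingCoeff = A.leadingCoeff := by
    have := Polynomial.leadingCoeff_comp (p := A) (q := X + 1) (by rw [X1_natDegree]; omega)
    simpa [X1_monic.leadingCoeff] using this
  have hcd : (A.comp (X + 1)).natDegree = A.natDegree := by
    have := Polynomial.natDegree_comp (p := A) (q := X + 1)
    simpa [X1_natDegree] using this
  have hc0 : A.comp (X + 1) ≠ 0 := by
    intro h
    apply hA
    rw [← leadingCoeff_eq_zero, ← hc, h, leadingCoeff_zero]
  have hM : ((X + 1 : Polynomial ℤ) * A.comp (X + 1)).natDegree = A.natDegree + 1 := by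
    rw [natDegree_mul (X1_monic.ne_zero) hc0, hcd, X1_natDegree]
    omega
  have hlt : A.natDegree < ((X + 1 : Polynomial ℤ) * A.comp (X + 1)).natDegree := by
    rw [hM]; omega
  rw [Tm, natDegree_sub_eq_left_of_natDegree_lt hlt, hM]

lemma Tm_add (A B : Polynomial ℤ) : Tm (A + B) = Tm A + Tm B := by
  simp [Tm, add_comp]; ring

lemma exists_A (d : ℕ) : ∀ Q : Polynomial ℤ, Q.natDegree ≤ d → Q.coeff 0 = 0 →
    ∃ A : Polynomial ℤ, (A = 0 ∨ A.natDegree + 1 ≤ d) ∧ ∃ c : ℤ, Tm A = Q + C c := by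
  induction d using Nat.strong_induction_on with
  | _ d IH =>
  intro Q hdeg h0
  by_cases hQ : Q = 0
  · exact ⟨0, Or.inl rfl, 0, by simp [hQ, Tm]⟩
  set d' := Q.natDegree with hd'
  have hd1 : 1 ≤ d' := by
    by_contra h
    have : d' = 0 := by omega
    obtain ⟨a, ha⟩ := Polynomial.natDegree_eq_zero.mp this
    apply hQ
    rw [← ha] at h0 ⊢
    simp at h0
    simp [h0]
  set q : ℤ := Q.coeff d' with hq
  have hqne : q ≠ 0 := by
    have := Polynomial.leadingCoeff_ne_zero.mpr hQ
    rwa [leadingCoeff] at this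
  set A₀ : Polynomial ℤ := C q * X ^ (d' - 1) with hA₀
  have hTA₀ : Tm A₀ = C q * (X + 1) ^ d' - C q * X ^ (d' - 1) := by
    rw [Tm, hA₀]
    simp only [mul_comp, C_comp, X_pow_comp]
    rw [show (X + 1 : Polynomial ℤ) * (C q * (X + 1) ^ (d' - 1)) =
        C q * ((X + 1) * (X + 1) ^ (d' - 1)) by ring, ← _root_.pow_succ']
    rw [show d' - 1 + 1 = d' by omega]
  have hpowdeg : ((X + 1 : Polynomial ℤ) ^ d').natDegree = d' := by
    rw [natDegree_pow, X1_natDegree, mul_one]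
  have hTA₀deg : (Tm A₀).natDegree ≤ d' := by
    rw [hTA₀]
    refine le_trans (natDegree_sub_le _ _) ?_
    apply max_le
    · exact le_trans (natDegree_mul_le) (by simp [hpowdeg])
    · exact le_trans (natDegree_mul_le) (by simp only [natDegree_C, natDegree_X_pow]; omega)
  have hTA₀coeff : (Tm A₀).coeff d' = q := by
    rw [hTA₀, coeff_sub, coeff_C_mul, coeff_C_mul]
    have h1 : ((X + 1 : Polynomial ℤ) ^ d').coeff d' = 1 := by
      have := (X1_monic.pow d').leadingCoeff
      rwa [leadingCoeff, hpowdeg] at this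
    have h2 : ((X : Polynomial ℤ) ^ (d' - 1)).coeff d' = 0 := by
      apply coeff_eq_zero_of_natDegree_lt
      rw [natDegree_X_pow]; omega
    rw [h1, h2]; ring
  set Q' : Polynomial ℤ := Q - Tm A₀ with hQ'
  have hQ'deg : Q'.natDegree ≤ d' - 1 := by
    rw [natDegree_le_iff_coeff_eq_zero]
    intro m hm
    rw [hQ', coeff_sub]
    rcases eq_or_lt_of_le (show d' ≤ m by omega) with h | h
    · rw [← h, hTA₀coeff, ← hq]; ring
    · rw [coeff_eq_zero_of_natDegree_lt (by omega),
        coeff_eq_zero_of_natDegree_lt (by omega)]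
      ring
  set Q'' : Polynomial ℤ := Q' - C (Q'.coeff 0) with hQ''
  have hQ''deg : Q''.natDegree ≤ d' - 1 := by
    refine le_trans (natDegree_sub_le _ _) (max_le hQ'deg (by simp))
  have hQ''0 : Q''.coeff 0 = 0 := by simp [hQ'']
  obtain ⟨A₁, hA₁d, c₁, hc₁⟩ := IH (d' - 1) (by omega) Q'' hQ''deg hQ''0
  refine ⟨A₀ + A₁, ?_, c₁ - Q'.coeff 0, ?_⟩
  · right
    have hA₀deg : A₀.natDegree ≤ d' - 1 := by
      rw [hA₀]
      exact le_trans natDegree_mul_le (by simp)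
    have hA₁deg : A₁.natDegree ≤ d' - 1 := by
      rcases hA₁d with h | h
      · simp [h]
      · omega
    have := natDegree_add_le A₀ A₁
    omega
  · rw [Tm_add, hc₁, hQ'', hQ', hTA₀, C_sub]
    ring

lemma Xk_C_natDegree (k : ℕ) (hk : 1 ≤ k) (c : ℤ) :
    ((X : Polynomial ℤ) ^ k + C c).natDegree = k := by
  apply le_antisymm
  · exact le_trans (natDegree_add_le _ _) (by simp)
  · apply le_natDegree_of_ne_zero
    rw [coeff_add, coeff_X_pow, if_pos rfl, coeff_C, if_neg (by omega)]
    simp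

/-- For every `k ≥ 1` there exists a unique pair of integers `(u_k, v_k)` together
with a unique integer polynomial `A_{k-1}` of degree `k − 1` such that
`(n+1)·A_{k-1}(n+1) − A_{k-1}(n) = n^k + u_k` for all `n`, and `v_k = −A_{k-1}(0)`. -/
theorem existsUnique_uvA (k : ℕ) (hk : 1 ≤ k) :
    ∃! t : ℤ × ℤ × Polynomial ℤ,
      t.2.2.natDegree = k - 1 ∧
      (∀ n : ℤ, (n + 1) * t.2.2.eval (n + 1) - t.2.2.eval n = n ^ k + t.1) ∧
      t.2.1 = -t.2.2.eval 0 := by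
  obtain ⟨A, hAd, c, hc⟩ := exists_A k (X ^ k) (by simp)
    (by rw [coeff_X_pow, if_neg (by omega)])
  have hA0 : A ≠ 0 := by
    intro h
    rw [h] at hc
    have h0 : (Tm 0 : Polynomial ℤ) = 0 := by simp [Tm]
    rw [h0] at hc
    have h1 := congrArg (fun p => Polynomial.coeff p k) hc
    simp only [coeff_zero, coeff_add, coeff_X_pow, if_pos rfl, coeff_C,
      if_neg (show ¬ k = 0 by omega)] at h1
    exact absurd h1 (by norm_num)
  have hdegTA : (Tm A).natDegree = A.natDegree + 1 := Tm_natDegree hA0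
  have hAdeg : A.natDegree = k - 1 := by
    rw [hc, Xk_C_natDegree k hk c] at hdegTA
    omega
  refine ⟨(c, -A.eval 0, A), ⟨hAdeg, ?_, rfl⟩, ?_⟩
  · intro n
    have h := congrArg (eval n) hc
    rw [eval_Tm] at h
    simpa using h
  · rintro ⟨u, v, B⟩ ⟨hBdeg, hBev, hv⟩
    have hTB : Tm B = X ^ k + C u := by
      apply Polynomial.funext
      intro n
      rw [eval_Tm]
      simpa using hBev n
    have hBA : B = A := by
      by_contra hne
      have hsub : B - A ≠ 0 := sub_ne_zero.mpr hne
      have h1 : Tm (B - A) = C (u - c) := by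
        rw [Tm_sub, hTB, hc, C_sub]; ring
      have h2 := Tm_natDegree hsub
      rw [h1, natDegree_C] at h2
      omega
    subst hBA
    have huc : u = c := by
      rw [hc] at hTB
      have := add_left_cancel hTB.symm
      exact C_injective this
    simp only [Prod.mk.injEq]
    exact ⟨huc, hv, trivial⟩
end

section
/- For every k ≥ 1, there exists a polynomial A_{k-1} in n of degree k−1 with integer coefficients such that for all n ≥ 0: ∑_{i=0}^{n-1} i! · (i^k + u_k) = v_k + n! · A_{k-1}(n), where u_k, v_k are defined by the recurrences of Table 1. -/
open Nat Finset Polynomial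

noncomputable def Apoly : ℕ → Polynomial ℤ
  | 0 => 0
  | 1 => 1
  | (m+2) => Polynomial.X^(m+1) - Polynomial.C ((m:ℤ)+1) * Apoly (m+1)
      - ∑ ℓ ∈ (Finset.Icc 1 m).attach, Polynomial.C (((m+2).choose ℓ.1 : ℤ)) * Apoly ℓ.1
decreasing_by
  all_goals first
    | omega
    | (have := ℓ.2; simp only [Finset.mem_Icc] at this; omega)

lemma Apoly_eq (m : ℕ) : Apoly (m+2) = Polynomial.X^(m+1) - Polynomial.C ((m:ℤ)+1) * Apoly (m+1)
      - ∑ ℓ ∈ Finset.Icc 1 m, Polynomial.C (((m+2).choose ℓ : ℤ)) * Apoly ℓ := by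
  rw [Apoly]
  congr 1
  exact Finset.sum_attach (Finset.Icc 1 m) fun ℓ => Polynomial.C (((m+2).choose ℓ : ℤ)) * Apoly ℓ

lemma Apoly_natDegree : ∀ k : ℕ, (Apoly (k+1)).natDegree = k := by
  intro k
  induction k using Nat.strong_induction_on with
  | _ k ih =>
    match k with
    | 0 => simp [Apoly]
    | (m+1) =>
      rw [Apoly]
      rw [sub_sub]
      rw [Polynomial.natDegree_sub_eq_left_of_natDegree_lt, Polynomial.natDegree_X_pow]
      rw [Polynomial.natDegree_X_pow]
      have h1 : (Polynomial.C ((m:ℤ)+1) * Apoly (m+1)).natDegree ≤ m := by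
        refine le_trans (Polynomial.natDegree_C_mul_le _ _) ?_
        rw [ih m (by omega)]
      have h2 : (∑ ℓ ∈ (Finset.Icc 1 m).attach,
          Polynomial.C (((m+2).choose ℓ.1 : ℤ)) * Apoly ℓ.1).natDegree ≤ m := by
        refine Polynomial.natDegree_sum_le_of_forall_le _ _ ?_
        rintro ⟨ℓ, hℓ⟩ -
        simp only [Finset.mem_Icc] at hℓ
        refine le_trans (Polynomial.natDegree_C_mul_le _ _) ?_
        show (Apoly ℓ).natDegree ≤ m
        rw [show ℓ = ℓ - 1 + 1 by omega, ih (ℓ-1) (by omega)]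
        omega
      calc (Polynomial.C ((m:ℤ)+1) * Apoly (m+1) + _).natDegree
          ≤ max _ _ := Polynomial.natDegree_add_le _ _
        _ ≤ m := max_le h1 h2
        _ < m + 1 := by omega

lemma binom_aux (m : ℕ) (x : ℤ) :
    (x+1)^(m+2) = x^(m+2) + ((m:ℤ)+2) * x^(m+1)
      + (∑ ℓ ∈ Finset.Icc 1 m, ((m+2).choose ℓ : ℤ) * x^ℓ) + 1 := by
  rw [add_pow]
  simp only [one_pow, mul_one]
  rw [Finset.sum_range_succ, Finset.sum_range_succ]
  have hr : Finset.range (m+1) = insert 0 (Finset.Icc 1 m) := by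
    ext j; simp [Finset.mem_Icc]; omega
  rw [hr, Finset.sum_insert (by simp)]
  simp [Nat.choose_succ_self_right, mul_comm]
  rw [Finset.sum_congr rfl (fun ℓ _ => by rw [mul_comm])]
  ring

/-- For every `k ≥ 1` there is an integer polynomial `A_{k-1}` of degree `k − 1`
such that `∑_{i=0}^{n-1} i!·(i^k + u_k) = v_k + n!·A_{k-1}(n)` for all `n ≥ 0`,
where `u_k, v_k` are given by the recurrences of Table 1. -/
theorem partial_sum_eq_vk_add_factorial_A (u v : ℕ → ℤ)
    (hu1 : u 1 = 0)
    (hu : ∀ k : ℕ, 1 ≤ k →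
      u (k + 1) = -(k : ℤ) * u k - (∑ ℓ ∈ Finset.Icc 1 (k - 1), ((k + 1).choose ℓ : ℤ) * u ℓ) + 1)
    (hv1 : v 1 = -1)
    (hv : ∀ k : ℕ, 1 ≤ k →
      v (k + 1) = -(k : ℤ) * v k - (∑ ℓ ∈ Finset.Icc 1 (k - 1), ((k + 1).choose ℓ : ℤ) * v ℓ))
    (k : ℕ) (hk : 1 ≤ k) :
    ∃ A : Polynomial ℤ, A.natDegree = k - 1 ∧
      ∀ n : ℕ, ∑ i ∈ Finset.range n, (i ! : ℤ) * ((i : ℤ) ^ k + u k)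
        = v k + (n ! : ℤ) * A.eval (n : ℤ) := by
  have key : ∀ k : ℕ, 1 ≤ k → ((Apoly k).eval 0 = -(v k)) ∧
      ∀ x : ℤ, (x+1) * (Apoly k).eval (x+1) - (Apoly k).eval x = x^k + u k := by
    intro k
    induction k using Nat.strong_induction_on with
    | _ k ih =>
      match k with
      | 0 => intro h; omega
      | 1 =>
        intro _
        refine ⟨by simp [Apoly, hv1], fun x => by simp [Apoly, hu1]⟩
      | (m+2) =>
        intro _
        have ihm := ih (m+1) (by omega) (by omega)
        have hueq := hu (m+1) (by omega)
        have hveq := hv (m+1) (by omega)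
        simp only [Nat.add_sub_cancel] at hueq hveq
        have hm2 : m + 1 + 1 = m + 2 := rfl
        rw [hm2] at hueq hveq
        constructor
        · rw [Apoly_eq]
          simp only [Polynomial.eval_sub, Polynomial.eval_pow, Polynomial.eval_X,
            Polynomial.eval_mul, Polynomial.eval_C, Polynomial.eval_finset_sum]
          have h0 : ∑ ℓ ∈ Finset.Icc 1 m, ((((m+2).choose ℓ : ℤ)) * (Apoly ℓ).eval 0)
              = -∑ ℓ ∈ Finset.Icc 1 m, ((m+2).choose ℓ : ℤ) * v ℓ := by
            rw [← Finset.sum_neg_distrib]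
            refine Finset.sum_congr rfl fun ℓ hℓ => ?_
            simp only [Finset.mem_Icc] at hℓ
            rw [(ih ℓ (by omega) hℓ.1).1]; ring
          rw [h0, (ihm).1, hveq]
          push_cast
          ring
        · intro x
          rw [Apoly_eq]
          simp only [Polynomial.eval_sub, Polynomial.eval_pow, Polynomial.eval_X,
            Polynomial.eval_mul, Polynomial.eval_C, Polynomial.eval_finset_sum]
          have hsum : (x+1) * (∑ ℓ ∈ Finset.Icc 1 m, ((m+2).choose ℓ : ℤ) * (Apoly ℓ).eval (x+1))
              - (∑ ℓ ∈ Finset.Icc 1 m, ((m+2).choose ℓ : ℤ) * (Apoly ℓ).eval x)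
              = ∑ ℓ ∈ Finset.Icc 1 m, ((m+2).choose ℓ : ℤ) * (x^ℓ + u ℓ) := by
            rw [Finset.mul_sum, ← Finset.sum_sub_distrib]
            refine Finset.sum_congr rfl fun ℓ hℓ => ?_
            simp only [Finset.mem_Icc] at hℓ
            rw [← (ih ℓ (by omega) hℓ.1).2 x]
            ring
          have hIH := ihm.2
          have e1 := hIH (x)
          have e2 : (x+1) * ((x+1)^(m+1) - ((m:ℤ)+1) * (Apoly (m+1)).eval (x+1)
                - ∑ ℓ ∈ Finset.Icc 1 m, ((m+2).choose ℓ : ℤ) * (Apoly ℓ).eval (x+1))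
              - ((x^(m+1)) - ((m:ℤ)+1) * (Apoly (m+1)).eval x
                - ∑ ℓ ∈ Finset.Icc 1 m, ((m+2).choose ℓ : ℤ) * (Apoly ℓ).eval x)
              = (x+1)^(m+2) - x^(m+1) - ((m:ℤ)+1) * (x^(m+1) + u (m+1))
                - ∑ ℓ ∈ Finset.Icc 1 m, ((m+2).choose ℓ : ℤ) * (x^ℓ + u ℓ) := by
            rw [← hsum, ← e1]
            ring
          rw [e2, hueq, binom_aux m x, Finset.sum_congr rfl
            (fun ℓ _ => (mul_add (((m+2).choose ℓ : ℤ)) (x^ℓ) (u ℓ))), Finset.sum_add_distrib]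
          push_cast
          ring
  obtain ⟨h0, hfe⟩ := key k hk
  refine ⟨Apoly k, ?_, ?_⟩
  · have h := Apoly_natDegree (k - 1)
    rw [show k - 1 + 1 = k from by omega] at h
    exact h
  · intro n
    induction n with
    | zero => simpa using by linarith [h0]
    | succ n ihn =>
      rw [Finset.sum_range_succ, ihn, Nat.factorial_succ]
      have := hfe (n : ℤ)
      push_cast
      linear_combination (-(n ! : ℤ)) * this
end

section
/- Let ε = ±1, x an indeterminate, and S_k^ε(n; x) = ∑_{i=0}^{n-1} ε^i · i! · i^k · x^i. Then S_k^ε(n; x) = δ_{0k} + ε·x·S_0^ε(n; x) + ε·x·∑_{ℓ=1}^{k+1} C(k+1,ℓ)·S_ℓ^ε(n; x) − ε^n · n! · n^k · x^n. -/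
open Nat Finset

lemma aux_binom {R : Type*} [CommRing R] (n k : ℕ) :
    ∑ ℓ ∈ Finset.Icc 1 (k + 1), ((k + 1).choose ℓ : R) * (n : R) ^ ℓ
      = ((n : R) + 1) ^ (k + 1) - 1 := by
  have hset : Finset.range (k + 2) = insert 0 (Finset.Icc 1 (k + 1)) := by
    ext m; simp [Finset.mem_range, Finset.mem_Icc]; omega
  have h1 : ((n : R) + 1) ^ (k + 1)
      = ∑ ℓ ∈ Finset.range (k + 2), ((k + 1).choose ℓ : R) * (n : R) ^ ℓ := by
    rw [add_pow]
    exact Finset.sum_congr rfl fun i _ => by ring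
  rw [h1, hset, Finset.sum_insert (by simp)]
  simp

/-- Theorem 1: with `S_k^ε(n; x) = ∑_{i=0}^{n-1} ε^i i! i^k x^i`, one has
`S_k^ε(n;x) = δ_{0k} + εx S_0^ε(n;x) + εx ∑_{ℓ=1}^{k+1} C(k+1,ℓ) S_ℓ^ε(n;x) − ε^n n! n^k x^n`,
as an identity in any commutative ring. -/
theorem recurrence_Skx {R : Type*} [CommRing R] (ε : R) (hε : ε = 1 ∨ ε = -1) (x : R)
    (S : ℕ → ℕ → R)
    (hS : ∀ k n : ℕ, S k n = ∑ i ∈ Finset.range n, ε ^ i * (i ! : R) * (i : R) ^ k * x ^ i)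
    (k n : ℕ) :
    S k n = (if k = 0 then 1 else 0) + ε * x * S 0 n
      + ε * x * (∑ ℓ ∈ Finset.Icc 1 (k + 1), ((k + 1).choose ℓ : R) * S ℓ n)
      - ε ^ n * (n ! : R) * (n : R) ^ k * x ^ n := by
  simp only [hS]
  induction n with
  | zero =>
    cases k <;> simp
  | succ n ih =>
    have hb := aux_binom (R := R) n k
    have hsum : ∑ ℓ ∈ Finset.Icc 1 (k + 1),
        ((k + 1).choose ℓ : R) * (ε ^ n * (n ! : R) * (n : R) ^ ℓ * x ^ n)
        = ε ^ n * (n ! : R) * x ^ n * (((n : R) + 1) ^ (k + 1) - 1) := by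
      rw [← hb, Finset.mul_sum]
      exact Finset.sum_congr rfl fun ℓ _ => by ring
    simp only [Finset.sum_range_succ, mul_add, Finset.sum_add_distrib]
    push_cast [Nat.factorial_succ]
    push_cast [Nat.factorial_succ] at ih
    rw [hsum]
    linear_combination ih
end

section
/- For the polynomials A_k^ε(n; x) = ∑_{j=0}^k A_{kj}^ε(n) x^j defined by the recurrence A_0^ε = 1 and ∑_{ℓ=1}^{k+1} C(k+1,ℓ) x^{k−ℓ+1} A_{ℓ−1}^ε(n;x) − ε A_{k−1}^ε(n;x) − n^k x^k = 0, the leading coefficient satisfies A_{kk}^ε(n) = ∑_{i=0}^k (−1)^{k+i} C(k+1, i+1) n^i. -/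
open Nat Finset Polynomial

/-- The target value: `T k n = ∑_{i=0}^k (−1)^{k+i} C(k+1,i+1) n^i`. -/
def Tc (j : ℕ) (n : ℤ) : ℤ :=
  ∑ i ∈ Finset.range (j + 1), (-1 : ℤ) ^ (j + i) * ((j + 1).choose (i + 1) : ℤ) * n ^ i

lemma Tc_zero (n : ℤ) : Tc 0 n = 1 := by simp [Tc]

lemma Tc_rec (j : ℕ) (n : ℤ) : Tc (j + 1) n = (n - 1) ^ (j + 1) - Tc j n := by
  have hb : (n - 1) ^ (j + 1)
      = ∑ i ∈ range (j + 2), (-1 : ℤ) ^ (j + 1 + i) * ((j + 1).choose i : ℤ) * n ^ i := by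
    rw [sub_pow]
    refine Finset.sum_congr rfl fun i hi => ?_
    have : (i + (j + 1)) = (j + 1 + i) := by ring
    rw [this]; push_cast; ring
  have h2 : Tc j n = ∑ i ∈ range (j + 2), (-1 : ℤ) ^ (j + i) * ((j + 1).choose (i + 1) : ℤ) * n ^ i := by
    rw [Tc, Finset.sum_range_succ (n := j + 1)]
    rw [Nat.choose_succ_self]
    push_cast; ring
  rw [hb, h2, ← Finset.sum_sub_distrib, Tc]
  refine Finset.sum_congr rfl fun i hi => ?_
  have hp : ((j + 2).choose (i + 1) : ℤ) = ((j + 1).choose i : ℤ) + ((j + 1).choose (i + 1) : ℤ) := by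
    rw [show j + 2 = (j+1) + 1 from rfl, Nat.choose_succ_succ]; push_cast; ring
  rw [hp]; ring

lemma Uid (k : ℕ) (n : ℤ) :
    ∑ j ∈ range (k + 2), ((k + 1).choose j : ℤ) * Tc j n = (n - 1) * n ^ k := by
  rw [Finset.sum_range_succ' (fun j => ((k + 1).choose j : ℤ) * Tc j n) (k + 1)]
  have h1 : ∀ t ∈ range (k + 1),
      ((k + 1).choose (t + 1) : ℤ) * Tc (t + 1) n
        = (k.choose t : ℤ) * (n - 1) ^ (t + 1)
          + ((k.choose (t + 1) : ℤ) * Tc (t + 1) n - (k.choose t : ℤ) * Tc t n) := by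
    intro t ht
    rw [Tc_rec, Nat.choose_succ_succ]
    push_cast; ring
  rw [Finset.sum_congr rfl h1, Finset.sum_add_distrib,
    Finset.sum_range_sub (fun t => (k.choose t : ℤ) * Tc t n) (k + 1)]
  have h2 : ∑ t ∈ range (k + 1), (k.choose t : ℤ) * (n - 1) ^ (t + 1) = (n - 1) * n ^ k := by
    have hn : (n : ℤ) ^ k = ((n - 1) + 1) ^ k := by ring
    rw [hn, add_pow, Finset.mul_sum, Finset.sum_congr rfl]
    intro t ht; push_cast; ring
  rw [h2, Nat.choose_succ_self]
  simp [Tc_zero]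

lemma Sid (k : ℕ) (n : ℤ) :
    ∑ j ∈ range (k + 1), ((k + 1).choose (j + 1) : ℤ) * Tc j n = n ^ k := by
  induction k with
  | zero => simp [Tc]
  | succ k ih =>
    have h1 : ∀ j ∈ range (k + 2),
        ((k + 2).choose (j + 1) : ℤ) * Tc j n
          = ((k + 1).choose j : ℤ) * Tc j n + ((k + 1).choose (j + 1) : ℤ) * Tc j n := by
      intro j hj
      rw [show k + 2 = (k + 1) + 1 from rfl, Nat.choose_succ_succ]
      push_cast; ring
    rw [Finset.sum_congr rfl h1, Finset.sum_add_distrib, Uid,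
      Finset.sum_range_succ (fun j => ((k + 1).choose (j + 1) : ℤ) * Tc j n) (k + 1),
      Nat.choose_succ_self, ih]
    push_cast; ring

/-- For the generating polynomials `A_k^ε(n; x)` of Theorem 2, the leading
coefficient satisfies `A_{kk}^ε(n) = ∑_{i=0}^k (−1)^{k+i} C(k+1, i+1) n^i`. -/
theorem A_leading_coeff (ε : ℤ) (hε : ε = 1 ∨ ε = -1) (A : ℕ → ℤ → Polynomial ℤ)
    (hA0 : ∀ n : ℤ, A 0 n = 1)
    (hrec : ∀ k : ℕ, 1 ≤ k → ∀ n : ℤ,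
      (∑ ℓ ∈ Finset.Icc 1 (k + 1),
          Polynomial.C (((k + 1).choose ℓ : ℤ)) * Polynomial.X ^ (k + 1 - ℓ) * A (ℓ - 1) n)
        - Polynomial.C ε * A (k - 1) n - Polynomial.C (n ^ k) * Polynomial.X ^ k = 0) :
    ∀ (k : ℕ) (n : ℤ),
      (A k n).coeff k = ∑ i ∈ Finset.range (k + 1),
        (-1 : ℤ) ^ (k + i) * ((k + 1).choose (i + 1) : ℤ) * n ^ i := by
  have key : ∀ k : ℕ, ∀ n : ℤ,
      (∀ m, k < m → (A k n).coeff m = 0) ∧ (A k n).coeff k = Tc k n := by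
    intro k
    induction k using Nat.strong_induction_on with
    | _ k ih =>
      match k, ih with
      | 0, _ =>
        intro n
        refine ⟨fun m hm => ?_, ?_⟩
        · rw [hA0]; rw [Polynomial.coeff_one, if_neg (by omega)]
        · rw [hA0, Tc_zero]; simp
      | (K + 1), ih =>
        intro n
        have E' : ∑ i ∈ range (K + 2),
            Polynomial.C (((K + 2).choose (i + 1) : ℤ)) * (A i n * X ^ (K + 1 - i))
            = Polynomial.C ε * A K n + Polynomial.C (n ^ (K + 1)) * X ^ (K + 1) := by
          have h := hrec (K + 1) (by omega) n
          rw [sub_sub, sub_eq_zero] at h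
          simp only [Nat.add_sub_cancel] at h
          rw [← h, ← Finset.Ico_add_one_right_eq_Icc, Finset.sum_Ico_eq_sum_range]
          refine Finset.sum_congr (by norm_num) fun i hi => ?_
          simp only [Finset.mem_range] at hi
          rw [show (1 : ℕ) + i = i + 1 from by omega,
            show K + 1 + 1 - (i + 1) = K + 1 - i from by omega, Nat.add_sub_cancel]
          ring
        have Ec : ∀ m : ℕ, K + 1 ≤ m →
            ∑ i ∈ range (K + 2), ((K + 2).choose (i + 1) : ℤ) * (A i n).coeff (m - (K + 1 - i))
              = ε * (A K n).coeff m + n ^ (K + 1) * (if m = K + 1 then 1 else 0) := by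
          intro m hm
          have h := congrArg (fun p => p.coeff m) E'
          simp only [Polynomial.finset_sum_coeff, Polynomial.coeff_C_mul, Polynomial.coeff_add,
            Polynomial.coeff_mul_X_pow', Polynomial.coeff_X_pow] at h
          have hterm : ∀ i ∈ range (K + 2),
              ((K + 2).choose (i + 1) : ℤ) *
                  (if K + 1 - i ≤ m then (A i n).coeff (m - (K + 1 - i)) else 0)
                = ((K + 2).choose (i + 1) : ℤ) * (A i n).coeff (m - (K + 1 - i)) := by
            intro i hi
            rw [if_pos (by omega)]
          rw [Finset.sum_congr rfl hterm, if_pos hm, Polynomial.coeff_C] at h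
          rw [h]
          by_cases hc : m = K + 1
          · rw [if_pos (by omega : m - (K + 1) = 0), if_pos hc]; ring
          · rw [if_neg (by omega : ¬ m - (K + 1) = 0), if_neg hc]; ring
        constructor
        · intro m hm
          have h := Ec m (by omega)
          have hz : ∀ i ∈ range (K + 1),
              ((K + 2).choose (i + 1) : ℤ) * (A i n).coeff (m - (K + 1 - i)) = 0 := by
            intro i hi
            simp only [Finset.mem_range] at hi
            rw [(ih i (by omega) n).1 (m - (K + 1 - i)) (by omega), mul_zero]
          rw [Finset.sum_range_succ, Finset.sum_eq_zero hz, zero_add, Nat.choose_self,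
            (ih K (by omega) n).1 m (by omega), if_neg (by omega : ¬ m = K + 1)] at h
          simpa using h
        · have h := Ec (K + 1) le_rfl
          rw [Finset.sum_range_succ] at h
          have hT : ∀ i ∈ range (K + 1),
              ((K + 2).choose (i + 1) : ℤ) * (A i n).coeff (K + 1 - (K + 1 - i))
                = ((K + 2).choose (i + 1) : ℤ) * Tc i n := by
            intro i hi
            simp only [Finset.mem_range] at hi
            rw [show K + 1 - (K + 1 - i) = i from by omega, (ih i (by omega) n).2]
          rw [Finset.sum_congr rfl hT, Nat.choose_self,
            show K + 1 - (K + 1 - (K + 1)) = K + 1 from by omega,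
            (ih K (by omega) n).1 (K + 1) (by omega), if_pos rfl] at h
          have hS := Sid (K + 1) n
          rw [Finset.sum_range_succ, Nat.choose_self] at hS
          push_cast at h hS
          linarith
  intro k n
  rw [(key k n).2]
  rfl
end

section
/- For the polynomials A_k^ε(n; x) defined by the recurrence A_0^ε = 1 and ∑_{ℓ=1}^{k+1} C(k+1,ℓ) x^{k−ℓ+1} A_{ℓ−1}^ε(n;x) − ε A_{k−1}^ε(n;x) − n^k x^k = 0, the coefficient of x^1 satisfies A_{k1}^ε(n) = (n − k(k+3)/2)·ε^{k+1} for all k ≥ 1. -/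
open Nat Finset Polynomial

/-- For the generating polynomials `A_k^ε(n; x)` of Theorem 2, the coefficient of
`x` satisfies `A_{k1}^ε(n) = (n − k(k+3)/2)·ε^{k+1}` for all `k ≥ 1`. -/
theorem A_coeff_one (ε : ℤ) (hε : ε = 1 ∨ ε = -1) (A : ℕ → ℤ → Polynomial ℤ)
    (hA0 : ∀ n : ℤ, A 0 n = 1)
    (hrec : ∀ k : ℕ, 1 ≤ k → ∀ n : ℤ,
      (∑ ℓ ∈ Finset.Icc 1 (k + 1),
          Polynomial.C (((k + 1).choose ℓ : ℤ)) * Polynomial.X ^ (k + 1 - ℓ) * A (ℓ - 1) n)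
        - Polynomial.C ε * A (k - 1) n - Polynomial.C (n ^ k) * Polynomial.X ^ k = 0) :
    ∀ k : ℕ, 1 ≤ k → ∀ n : ℤ,
      (A k n).coeff 1 = (n - ((k * (k + 3) / 2 : ℕ) : ℤ)) * ε ^ (k + 1) := by
  have hε2 : ε ^ 2 = 1 := by rcases hε with h | h <;> simp [h]
  -- Solve the recurrence for `A k n`.
  have hstep : ∀ k : ℕ, 1 ≤ k → ∀ n : ℤ,
      A k n = Polynomial.C ε * A (k - 1) n + Polynomial.C (n ^ k) * Polynomial.X ^ k
        - ∑ ℓ ∈ Finset.Icc 1 k,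
            Polynomial.C (((k + 1).choose ℓ : ℤ)) * Polynomial.X ^ (k + 1 - ℓ) * A (ℓ - 1) n := by
    intro k hk n
    have h := hrec k hk n
    rw [Finset.sum_Icc_succ_top (by omega : 1 ≤ k + 1)] at h
    have e : Polynomial.C (((k + 1).choose (k + 1) : ℤ)) *
        Polynomial.X ^ (k + 1 - (k + 1)) * A (k + 1 - 1) n = A k n := by
      simp [Nat.choose_self]
    rw [e] at h
    linear_combination h
  -- coefficient of a generic term at 1
  have cterm : ∀ (a : ℤ) (e : ℕ) (p : Polynomial ℤ),
      (Polynomial.C a * Polynomial.X ^ e * p).coeff 1 =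
        if e ≤ 1 then a * p.coeff (1 - e) else 0 := by
    intro a e p
    rw [mul_assoc, Polynomial.coeff_C_mul, mul_comm (Polynomial.X ^ e) p,
      Polynomial.coeff_mul_X_pow', mul_ite, mul_zero]
  -- constant coefficient
  have h0 : ∀ k : ℕ, ∀ n : ℤ, (A k n).coeff 0 = ε ^ k := by
    intro k
    induction k with
    | zero => intro n; simp [hA0]
    | succ m ih =>
      intro n
      rw [hstep (m + 1) (by omega) n]
      simp only [Nat.add_sub_cancel]
      rw [Polynomial.coeff_sub, Polynomial.coeff_add]
      have c2 : (Polynomial.C (n ^ (m + 1)) * Polynomial.X ^ (m + 1)).coeff 0 = 0 := by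
        simp [Polynomial.coeff_X_pow]
      have c3 : (∑ ℓ ∈ Finset.Icc 1 (m + 1),
          Polynomial.C (((m + 2).choose ℓ : ℤ)) * Polynomial.X ^ (m + 2 - ℓ) *
            A (ℓ - 1) n).coeff 0 = 0 := by
        rw [Polynomial.finset_sum_coeff]
        apply Finset.sum_eq_zero
        intro ℓ hℓ
        simp only [Finset.mem_Icc] at hℓ
        rw [Polynomial.mul_coeff_zero, Polynomial.mul_coeff_zero, Polynomial.coeff_X_pow]
        rw [if_neg (by omega)]
        ring
      rw [c2, c3, Polynomial.coeff_C_mul, ih n]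
      ring
  -- main induction
  intro k hk
  induction k, hk using Nat.le_induction with
  | base =>
    intro n
    rw [hstep 1 (by norm_num) n]
    rw [Polynomial.coeff_sub, Polynomial.coeff_add, Polynomial.coeff_C_mul]
    rw [Polynomial.finset_sum_coeff]
    rw [show Finset.Icc 1 1 = {1} from rfl, Finset.sum_singleton]
    rw [cterm]
    norm_num [hA0, hε2, Polynomial.coeff_C_mul, Polynomial.coeff_X, Polynomial.coeff_one]
  | succ m hm ih =>
    intro n
    rw [hstep (m + 1) (by omega) n]
    simp only [Nat.add_sub_cancel]
    rw [Polynomial.coeff_sub, Polynomial.coeff_add, Polynomial.coeff_C_mul]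
    have c2 : (Polynomial.C (n ^ (m + 1)) * Polynomial.X ^ (m + 1)).coeff 1 = 0 := by
      rw [Polynomial.coeff_C_mul, Polynomial.coeff_X_pow, if_neg (by omega), mul_zero]
    have c3 : (∑ ℓ ∈ Finset.Icc 1 (m + 1),
        Polynomial.C (((m + 2).choose ℓ : ℤ)) * Polynomial.X ^ (m + 2 - ℓ) *
          A (ℓ - 1) n).coeff 1 = ((m + 2 : ℕ) : ℤ) * ε ^ m := by
      rw [Polynomial.finset_sum_coeff]
      rw [Finset.sum_eq_single (m + 1)]
      · rw [cterm, if_pos (by omega)]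
        have : m + 2 - (m + 1) = 1 := by omega
        rw [this]
        have : m + 1 - 1 = m := by omega
        rw [this, h0 m n, Nat.choose_succ_self_right]
      · intro ℓ hℓ hne
        simp only [Finset.mem_Icc] at hℓ
        rw [cterm, if_neg (by omega)]
      · intro h
        simp only [Finset.mem_Icc] at h
        omega
    push_cast at c3
    rw [c2, c3, ih n]
    have hcast : ((m + 1) * (m + 1 + 3) / 2 : ℕ) = (m * (m + 3) / 2 : ℕ) + (m + 2) := by
      have hdvd : 2 ∣ m * (m + 3) := by
        rcases Nat.even_or_odd m with h | h
        · exact Dvd.dvd.mul_right h.two_dvd _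
        · obtain ⟨j, rfl⟩ := h
          exact ⟨(2 * j + 1) * (j + 2), by ring⟩
      obtain ⟨c, hc⟩ := hdvd
      have he : (m + 1) * (m + 1 + 3) = m * (m + 3) + 2 * (m + 2) := by ring
      omega
    have hpow : ε ^ (m + 1 + 1) = ε ^ m := by
      rw [show m + 1 + 1 = m + 2 from rfl, pow_add, hε2, mul_one]
    have hcastZ : ((((m + 1) * (m + 1 + 3) / 2 : ℕ)) : ℤ)
        = ((m * (m + 3) / 2 : ℕ) : ℤ) + ((m : ℤ) + 2) := by exact_mod_cast hcast
    rw [hcastZ, hpow]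
    linear_combination (n - ((m * (m + 3) / 2 : ℕ) : ℤ)) * ε ^ m * hε2
end

section
/- Let ε = ±1 and let A_{k−1}^ε(n; x) be the polynomials defined by the recurrence of Theorem 2, with U_k^ε(x) = x·A_{k−1}^ε(1; x) − ε·A_{k−1}^ε(0; x) and V_k^ε(x) = −ε·A_{k−1}^ε(0; x). Then for all n ≥ 0 and k ≥ 1: ∑_{i=0}^{n−1} ε^i · i! · (i^k x^k + U_k^ε(x)) · x^i = V_k^ε(x) + A_{k−1}^ε(n; x) · ε^{n−1} · n! · x^n, as an identity of polynomials in x. -/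
open Nat Finset Polynomial

/-- Theorem 2 summation formula: with `U_k^ε(x) = x·A_{k−1}^ε(1;x) − ε·A_{k−1}^ε(0;x)`
and `V_k^ε(x) = −ε·A_{k−1}^ε(0;x)`, for all `n ≥ 0` and `k ≥ 1`:
`∑_{i=0}^{n−1} ε^i i! (i^k x^k + U_k^ε(x)) x^i = V_k^ε(x) + A_{k−1}^ε(n;x) ε^{n−1} n! x^n`
as an identity of polynomials in `x`.  (Since `ε = ±1`, `ε^{n−1} = ε^{n+1}`, and the
latter is used to avoid truncated subtraction at `n = 0`.) -/
theorem summation_formula_A (ε : ℤ) (hε : ε = 1 ∨ ε = -1) (A : ℕ → ℤ → Polynomial ℤ)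
    (hA0 : ∀ n : ℤ, A 0 n = 1)
    (hrec : ∀ k : ℕ, 1 ≤ k → ∀ n : ℤ,
      (∑ ℓ ∈ Finset.Icc 1 (k + 1),
          Polynomial.C (((k + 1).choose ℓ : ℤ)) * Polynomial.X ^ (k + 1 - ℓ) * A (ℓ - 1) n)
        - Polynomial.C ε * A (k - 1) n - Polynomial.C (n ^ k) * Polynomial.X ^ k = 0)
    (U V : ℕ → Polynomial ℤ)
    (hU : ∀ k : ℕ, U k = Polynomial.X * A (k - 1) 1 - Polynomial.C ε * A (k - 1) 0)
    (hV : ∀ k : ℕ, V k = -(Polynomial.C ε * A (k - 1) 0)) :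
    ∀ (n : ℕ) (k : ℕ), 1 ≤ k →
      ∑ i ∈ Finset.range n,
          Polynomial.C (ε ^ i * (i ! : ℤ)) *
            (Polynomial.C ((i : ℤ) ^ k) * Polynomial.X ^ k + U k) * Polynomial.X ^ i
        = V k + A (k - 1) (n : ℤ) * Polynomial.C (ε ^ (n + 1) * (n ! : ℤ)) * Polynomial.X ^ n := by
  have hε2 : ε * ε = 1 := by rcases hε with h | h <;> simp [h]
  have hCe : Polynomial.C ε * Polynomial.C ε = 1 := by
    rw [← Polynomial.C_mul, hε2, Polynomial.C_1]
  -- Key identity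
  have key : ∀ k : ℕ, 1 ≤ k → ∀ n : ℤ,
      Polynomial.C (n + 1) * Polynomial.X * A (k - 1) (n + 1)
        = Polynomial.X * A (k - 1) 1 + Polynomial.C (n ^ k) * Polynomial.X ^ k
          + Polynomial.C ε * A (k - 1) n - Polynomial.C ε * A (k - 1) 0 := by
    intro k
    induction k using Nat.strong_induction_on with
    | _ k IH =>
      intro hk n
      rcases Nat.lt_or_ge k 2 with hk2 | hk2
      · -- k = 1
        interval_cases k
        simp only [Nat.sub_self, hA0, pow_one, mul_one]
        simp only [map_add, map_one]
        ring
      · -- k = m + 1 with m ≥ 1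
        obtain ⟨m, rfl⟩ : ∃ m, k = m + 1 := ⟨k - 1, by omega⟩
        have hm : 1 ≤ m := by omega
        -- the lower part of the recurrence sum
        set S : ℤ → Polynomial ℤ := fun t => ∑ ℓ ∈ Finset.Icc 1 m,
          Polynomial.C (((m + 1).choose ℓ : ℤ)) * Polynomial.X ^ (m + 1 - ℓ) * A (ℓ - 1) t
          with hS
        have hAm : ∀ t : ℤ, A m t
            = Polynomial.C ε * A (m - 1) t + Polynomial.C (t ^ m) * Polynomial.X ^ m - S t := by
          intro t
          have h := hrec m hm t
          rw [Finset.sum_Icc_succ_top (by omega : 1 ≤ m + 1)] at h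
          simp only [Nat.choose_self, Nat.cast_one, Nat.sub_self, Nat.add_sub_cancel,
            pow_zero, map_one, one_mul, mul_one] at h
          simp only [hS]
          linear_combination h
        -- binomial identity for the scalar coefficients
        have hbin : ((n + 1) ^ (m + 1) - 1 - n ^ (m + 1) : ℤ)
            = ∑ ℓ ∈ Finset.Icc 1 m, n ^ ℓ * ((m + 1).choose ℓ : ℤ) := by
          have hset : Finset.range (m + 2)
              = insert 0 (insert (m + 1) (Finset.Icc 1 m)) := by
            ext x
            simp only [Finset.mem_range, Finset.mem_insert, Finset.mem_Icc]
            omega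
          have hpow := add_pow n 1 (m + 1)
          simp only [one_pow, mul_one] at hpow
          rw [hset, Finset.sum_insert (by simp), Finset.sum_insert (by
            simp only [Finset.mem_Icc]; omega)] at hpow
          simp only [pow_zero, Nat.choose_zero_right, Nat.choose_self, Nat.cast_one,
            one_mul, mul_one] at hpow
          linear_combination hpow
        -- the sum identity
        have hsum : Polynomial.C (n + 1) * Polynomial.X * S (n + 1)
            = Polynomial.X * S 1
              + Polynomial.C ((n + 1) ^ (m + 1) - 1 - n ^ (m + 1)) * Polynomial.X ^ (m + 1)
              + Polynomial.C ε * S n - Polynomial.C ε * S 0 := by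
          rw [hbin, map_sum]
          simp only [hS, Finset.mul_sum, Finset.sum_mul, ← Finset.sum_add_distrib,
            ← Finset.sum_sub_distrib]
          refine Finset.sum_congr rfl ?_
          intro ℓ hℓ
          simp only [Finset.mem_Icc] at hℓ
          have hIH := IH ℓ (by omega) (by omega) n
          have hx : (Polynomial.X : Polynomial ℤ) ^ (m + 1 - ℓ) * Polynomial.X ^ ℓ
              = Polynomial.X ^ (m + 1) := by
            rw [← pow_add]
            congr 1
            omega
          simp only [map_mul]
          linear_combination (Polynomial.C (((m + 1).choose ℓ : ℤ))
              * Polynomial.X ^ (m + 1 - ℓ)) * hIH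
            + (Polynomial.C (((m + 1).choose ℓ : ℤ)) * Polynomial.C (n ^ ℓ)) * hx
        -- put everything together
        simp only [Nat.add_sub_cancel] at *
        rw [hAm (n + 1), hAm 1, hAm n, hAm 0]
        have hIHm := IH m (by omega) hm n
        have h0 : ((0 : ℤ) ^ m) = 0 := by
          exact zero_pow (by omega)
        rw [h0]
        simp only [map_zero, zero_mul, map_sub, map_add, map_one, map_pow, map_mul]
        simp only [map_sub, map_add, map_one, map_pow, map_mul] at hsum hIHm
        linear_combination Polynomial.C ε * hIHm - hsum
  -- main induction on n
  intro n k hk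
  induction n with
  | zero =>
      simp only [Finset.range_zero, Finset.sum_empty, Nat.cast_zero, Nat.factorial_zero,
        Nat.cast_one, mul_one, pow_one, pow_zero, hV]
      ring
  | succ n ih =>
      rw [Finset.sum_range_succ, ih, hU]
      have hkey := key k hk (n : ℤ)
      have he1 : ε ^ (n + 1) = ε ^ n * ε := pow_succ ε n
      have he2 : ε ^ (n + 1 + 1) = ε ^ n := by
        rw [pow_succ, pow_succ, mul_assoc, hε2, mul_one]
      have e3 : ((n + 1 : ℕ) : ℤ) = (n : ℤ) + 1 := by push_cast; ring
      have e4 : (((n + 1 : ℕ))! : ℤ) = ((n : ℤ) + 1) * (n ! : ℤ) := by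
        rw [Nat.factorial_succ]; push_cast; ring
      rw [he1, he2, e3, e4]
      simp only [map_mul, map_pow, map_add, map_one] at hkey ⊢
      linear_combination (-(Polynomial.C ε ^ n * Polynomial.C ((n ! : ℤ))
          * Polynomial.X ^ n)) * hkey
end

section
/- Let B_k denote the Bell numbers defined by B_0 = 1 and B_{k+1} = ∑_{ℓ=0}^k C(k,ℓ) B_ℓ. With U_k^+(x) = x·A_{k−1}^+(1; x) − A_{k−1}^+(0; x) where A^+ are the generating polynomials of Theorem 2 with ε = +1, one has −U_k^+(−1) = B_{k+1} for all k ≥ 1. -/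
/-!
At `x = -1` the recurrence says that `s j = A_j(1; -1) + A_j(0; -1)` satisfies, for `k ≥ 1`,
`∑_{ℓ ≤ k} C(k+1, ℓ+1) (-1)^(k-ℓ) s ℓ = s (k-1) + (-1)^k`, a recurrence in which `s k` appears
with coefficient `1`, so it determines `s` from `s 0 = 2`. Binomial inversion of the Bell
recurrence gives `∑_{ℓ ≤ m} (-1)^(m-ℓ) C(m, ℓ) B (ℓ+1) = B m`, which for `m = k + 1` says that
`j ↦ B (j+2)` satisfies the same recurrence. Hence `s j = B (j+2)`, and `-U_k(-1) = s (k-1)`.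
-/

open Nat Finset Polynomial fwdDiff

theorem fwdDiff_iter_smul_const {M G : Type*} [AddCommMonoid M] [AddCommGroup G] (h : M)
    (f : M → ℤ) (g : G) (n : ℕ) (y : M) :
    (Δ_[h])^[n] (fun x ↦ f x • g) y = (Δ_[h])^[n] f y • g := by
  simp only [fwdDiff_iter_eq_sum_shift, sum_smul, smul_eq_mul, mul_smul]

theorem sum_alternating_choose_smul_eq_of_eq_sum_choose {G : Type*} [AddCommGroup G]
    {a b : ℕ → G} (h : ∀ m, b m = ∑ k ∈ range (m + 1), m.choose k • a k) (m : ℕ) :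
    ∑ k ∈ range (m + 1), ((-1 : ℤ) ^ (m - k) * m.choose k) • b k = a m := by
  -- `b` agrees on `[0, m]` with the Newton series `f`, whose `m`-th difference at `0` is `a m`.
  set f : ℕ → G := ∑ j ∈ range (m + 1), fun x ↦ (x.choose j : ℤ) • a j
  have hbf : ∀ x ≤ m, b x = f x := by
    intro x hx
    rw [h, sum_subset (range_subset_range.2 (by omega : x + 1 ≤ m + 1))]
    · simp [f, natCast_zsmul]
    · intro j _ hj
      simp [choose_eq_zero_of_lt (by simpa using hj : x < j)]
  calc ∑ k ∈ range (m + 1), ((-1 : ℤ) ^ (m - k) * m.choose k) • b k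
      = (Δ_[1])^[m] f 0 := by
        rw [fwdDiff_iter_eq_sum_shift]
        refine sum_congr rfl fun k hk ↦ ?_
        rw [hbf k (by simpa [Nat.lt_succ_iff] using hk), zero_add, smul_eq_mul, mul_one]
    _ = a m := by
        simp only [f, fwdDiff_iter_finsetSum, Finset.sum_apply, fwdDiff_iter_smul_const,
          fwdDiff_iter_choose_zero]
        simp

theorem sum_choose_succ_mul_neg_one_pow_mul_bell {R : Type*} [CommRing R] {B : ℕ → R}
    (hB0 : B 0 = 1) (hB : ∀ k, B (k + 1) = ∑ ℓ ∈ range (k + 1), (k.choose ℓ : R) * B ℓ) (k : ℕ) :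
    ∑ ℓ ∈ range (k + 1), ((k + 1).choose (ℓ + 1) : R) * (-1) ^ (k - ℓ) * B (ℓ + 2)
      = B (k + 1) + (-1) ^ k := by
  have hB1 : B 1 = 1 := by simpa [hB0] using hB 0
  have hinv := sum_alternating_choose_smul_eq_of_eq_sum_choose (a := B) (b := fun m ↦ B (m + 1))
    (by simpa only [nsmul_eq_mul] using hB) (k + 1)
  simp only [sum_range_succ' _ (k + 1), Nat.add_sub_add_right, zsmul_eq_mul, Int.cast_mul,
    Int.cast_pow, Int.cast_neg, Int.cast_one, Int.cast_natCast, choose_zero_right, Nat.cast_one,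
    mul_one, Nat.sub_zero, hB1] at hinv
  rw [← hinv, pow_succ]
  ring_nf

theorem eq_of_unitriangular_recurrence {R : Type*} [Ring R] (c : ℕ → ℕ → R) (hc : ∀ k, c k k = 1)
    (g : ℕ → R) {s t : ℕ → R} (h0 : s 0 = t 0)
    (hs : ∀ k, 1 ≤ k → ∑ ℓ ∈ range (k + 1), c k ℓ * s ℓ = s (k - 1) + g k)
    (ht : ∀ k, 1 ≤ k → ∑ ℓ ∈ range (k + 1), c k ℓ * t ℓ = t (k - 1) + g k) : s = t := by
  funext k
  induction k using Nat.strong_induction_on with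
  | _ k ih =>
    rcases k with _ | k
    · exact h0
    · have hsk := hs (k + 1) (by omega)
      have htk := ht (k + 1) (by omega)
      have hlower :
          ∑ ℓ ∈ range (k + 1), c (k + 1) ℓ * s ℓ = ∑ ℓ ∈ range (k + 1), c (k + 1) ℓ * t ℓ :=
        sum_congr rfl fun ℓ hℓ ↦ by rw [ih ℓ (by simpa [Nat.lt_succ_iff] using hℓ)]
      rw [sum_range_succ, hc, one_mul, hlower, Nat.add_sub_cancel, ih k (by omega)] at hsk
      rw [sum_range_succ, hc, one_mul, Nat.add_sub_cancel] at htk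
      exact add_left_cancel (hsk.trans htk.symm)

theorem sum_choose_succ_mul_pow_mul_eval_of_recurrence {R : Type*} [CommRing R]
    {A : ℕ → R[X]} {k : ℕ} {q : R[X]}
    (h : ∑ ℓ ∈ Icc 1 (k + 1), C ((k + 1).choose ℓ : R) * X ^ (k + 1 - ℓ) * A (ℓ - 1)
      - A (k - 1) - q = 0) (x : R) :
    ∑ ℓ ∈ range (k + 1), ((k + 1).choose (ℓ + 1) : R) * x ^ (k - ℓ) * (A ℓ).eval x
      = (A (k - 1)).eval x + q.eval x := by
  have hx := congrArg (eval x) h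
  rw [← Ico_add_one_right_eq_Icc, sum_Ico_eq_sum_range] at hx
  simp only [eval_sub, eval_finsetSum, eval_mul, eval_pow, eval_C, eval_X, eval_zero,
    add_comm 1, Nat.add_sub_cancel, Nat.add_sub_add_right] at hx
  rw [← sub_eq_zero, ← hx]
  ring

/-- With `B_k` the Bell numbers (`B_0 = 1`, `B_{k+1} = ∑_{ℓ=0}^k C(k,ℓ) B_ℓ`) and
`U_k^+(x) = x·A_{k−1}^+(1;x) − A_{k−1}^+(0;x)` built from the generating polynomials
of Theorem 2 with `ε = +1`, one has `−U_k^+(−1) = B_{k+1}` for all `k ≥ 1`. -/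
theorem neg_U_eval_neg_one_eq_bell (A : ℕ → ℤ → Polynomial ℤ)
    (hA0 : ∀ n : ℤ, A 0 n = 1)
    (hrec : ∀ k : ℕ, 1 ≤ k → ∀ n : ℤ,
      (∑ ℓ ∈ Finset.Icc 1 (k + 1),
          Polynomial.C (((k + 1).choose ℓ : ℤ)) * Polynomial.X ^ (k + 1 - ℓ) * A (ℓ - 1) n)
        - A (k - 1) n - Polynomial.C (n ^ k) * Polynomial.X ^ k = 0)
    (U : ℕ → Polynomial ℤ)
    (hU : ∀ k : ℕ, U k = Polynomial.X * A (k - 1) 1 - A (k - 1) 0)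
    (B : ℕ → ℤ)
    (hB0 : B 0 = 1)
    (hB : ∀ k : ℕ, B (k + 1) = ∑ ℓ ∈ Finset.range (k + 1), (k.choose ℓ : ℤ) * B ℓ) :
    ∀ k : ℕ, 1 ≤ k → -((U k).eval (-1)) = B (k + 1) := by
  have hA : ∀ k, 1 ≤ k → ∀ n : ℤ, ∑ ℓ ∈ range (k + 1),
      ((k + 1).choose (ℓ + 1) : ℤ) * (-1) ^ (k - ℓ) * (A ℓ n).eval (-1)
        = (A (k - 1) n).eval (-1) + n ^ k * (-1) ^ k := fun k hk n ↦ by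
    simpa using sum_choose_succ_mul_pow_mul_eval_of_recurrence (A := fun j ↦ A j n)
      (hrec k hk n) (-1)
  have hsum : (fun j ↦ (A j 1).eval (-1) + (A j 0).eval (-1)) = fun j ↦ B (j + 2) := by
    refine eq_of_unitriangular_recurrence
      (fun k ℓ ↦ ((k + 1).choose (ℓ + 1) : ℤ) * (-1) ^ (k - ℓ)) (by simp) (fun k ↦ (-1) ^ k)
      ?_ (fun k hk ↦ ?_) (fun k hk ↦ ?_)
    · simp [hA0, hB 1, sum_range_succ, hB 0, hB0]
    · simp only [mul_add, sum_add_distrib, hA k hk 1, hA k hk 0, one_pow, one_mul,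
        zero_pow (by omega : k ≠ 0), zero_mul]
      ring
    · rw [sum_choose_succ_mul_neg_one_pow_mul_bell hB0 hB k, show k - 1 + 2 = k + 1 by omega]
  intro k hk
  obtain ⟨j, rfl⟩ : ∃ j, k = j + 1 := ⟨k - 1, by omega⟩
  rw [hU, ← congrFun hsum j]
  simp only [eval_sub, eval_mul, eval_X, Nat.add_sub_cancel]
  ring
end
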